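/- For even n ≥ 2, the vector ω_n = (â_{k_n}, b̂_{k_n'}, ĉ_{k_n'})ᵀ satisfies ω_n = M₂^{n/2}·(0,1,1)ᵀ, where M₂ = [[2,−1,0],[2,1,2],[−2,−1,2]], k_n = (2·2^n+1)/3, k_n' = k_n − 2^n, â_k is the Fourier coefficient of |P_n|² at k, b̂_k that of \overline{P_n}Q_n at k, and ĉ_k that of P_n\overline{Q_n} at k. -/

import Mathlib

open Polynomial

/-- Rudin-Shapiro pair (P_n, Q_n). -/
noncomputable def RS : ℕ → Polynomial ℤ × Polynomial ℤ
  | 0 => (1, 1)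
  | n + 1 => ((RS n).1 + X ^ (2 ^ n) * (RS n).2, (RS n).1 - X ^ (2 ^ n) * (RS n).2)

noncomputable def RSP (n : ℕ) : Polynomial ℤ := (RS n).1
noncomputable def RSQ (n : ℕ) : Polynomial ℤ := (RS n).2

/-- evaluation at a complex number -/
noncomputable def Pe (n : ℕ) (z : ℂ) : ℂ := Polynomial.aeval z (RSP n)
noncomputable def Qe (n : ℕ) (z : ℂ) : ℂ := Polynomial.aeval z (RSQ n)
/-- The k-th Fourier coefficient of `t ↦ f (e^{it})`:
`(1/2π) ∫₀^{2π} f(e^{it}) e^{-ikt} dt`. -/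
noncomputable def fc (f : ℂ → ℂ) (k : ℤ) : ℂ :=
  (1 / (2 * Real.pi)) *
    ∫ t in (0:ℝ)..(2 * Real.pi),
      f (Complex.exp (t * Complex.I)) * Complex.exp (-(k : ℂ) * t * Complex.I)

/-- z ↦ |P_n(z)|² on the unit circle -/
noncomputable def fP (n : ℕ) (z : ℂ) : ℂ := Pe n z * (starRingEnd ℂ) (Pe n z)
/-- z ↦ conj(P_n(z)) Q_n(z) on the unit circle -/
noncomputable def fPQ (n : ℕ) (z : ℂ) : ℂ := (starRingEnd ℂ) (Pe n z) * Qe n z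
/-- z ↦ P_n(z) conj(Q_n(z)) on the unit circle -/
noncomputable def fQP (n : ℕ) (z : ℂ) : ℂ := Pe n z * (starRingEnd ℂ) (Qe n z)

def M2 : Matrix (Fin 3) (Fin 3) ℂ := !![2,-1,0; 2,1,2; -2,-1,2]

/-!
Write `â, b̂, ĉ, d̂` for the Fourier coefficients of `|P_n|², P̄_n Q_n, P_n Q̄_n, |Q_n|²`. Since
`P_{n+1} = P_n + z^N Q_n`, `Q_{n+1} = P_n - z^N Q_n` with `N = 2^n` and `z̄^N z^N = 1` on the circle,
each coefficient at level `n + 1` is a signed sum of `â k, b̂ (k - N), ĉ (k + N), d̂ k` at level `n`.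
These coefficients vanish for `|k| ≥ 2^n`, and `â k + d̂ k = 0` for `k ≠ 0` because
`|P_n|² + |Q_n|² = 2^{n+1}`. With these, two steps of the recursion at the indices
`k_{n+2} = 4 k_n - 1` and `k_{n+2}' = k_n - 2^{n+1}` leave exactly the entries of `M₂`, so
`ω_{n+2} = M₂ ω_n`; and `ω_0 = (0, 1, 1)`.
-/

open Complex

theorem fc_congr {f g : ℂ → ℂ} (h : ∀ z, ‖z‖ = 1 → f z = g z) (k : ℤ) : fc f k = fc g k := by
  simp only [fc, h _ (norm_exp_ofReal_mul_I _)]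

theorem fc_add {f g : ℂ → ℂ} (hf : Continuous f) (hg : Continuous g) (k : ℤ) :
    fc (fun z => f z + g z) k = fc f k + fc g k := by
  have hint : ∀ u : ℂ → ℂ, Continuous u → IntervalIntegrable
      (fun t : ℝ => u (exp (t * I)) * exp (-(k : ℂ) * t * I)) MeasureTheory.volume
        0 (2 * Real.pi) :=
    fun u hu => Continuous.intervalIntegrable (by fun_prop) _ _
  simp only [fc, add_mul, intervalIntegral.integral_add (hint f hf) (hint g hg), mul_add]

theorem fc_const_mul (c : ℂ) (f : ℂ → ℂ) (k : ℤ) : fc (fun z => c * f z) k = c * fc f k := by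
  simp only [fc, mul_assoc, intervalIntegral.integral_const_mul]
  ring

theorem fc_pow_mul (N : ℕ) (f : ℂ → ℂ) (k : ℤ) :
    fc (fun z => z ^ N * f z) k = fc f (k - N) := by
  unfold fc
  congr 2 with t
  dsimp only
  rw [← exp_nat_mul, mul_right_comm, mul_comm, ← exp_add]
  congr 2
  push_cast
  ring

theorem fc_conj_pow_mul (N : ℕ) (f : ℂ → ℂ) (k : ℤ) :
    fc (fun z => starRingEnd ℂ z ^ N * f z) k = fc f (k + N) := by
  unfold fc
  congr 2 with t
  dsimp only
  rw [← exp_conj, ← exp_nat_mul, mul_right_comm, mul_comm, ← exp_add]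
  congr 2
  simp only [map_mul, conj_ofReal, conj_I]
  push_cast
  ring

theorem fc_one (k : ℤ) : fc (fun _ => 1) k = if k = 0 then 1 else 0 := by
  split_ifs with hk
  · simp only [fc, hk, Int.cast_zero, neg_zero, zero_mul, exp_zero, mul_one,
      intervalIntegral.integral_const, sub_zero, real_smul, ofReal_mul, ofReal_ofNat]
    field_simp
  · have hc : -(k : ℂ) * I ≠ 0 := by simp [hk]
    have hexp : ∀ t : ℝ, exp (-(k : ℂ) * t * I) = exp (-(k : ℂ) * I * t) := fun t => by ring_nf
    simp only [fc, one_mul, hexp, integral_exp_mul_complex hc]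
    have hper : -(k : ℂ) * I * ((2 * Real.pi : ℝ) : ℂ) = ((-k : ℤ) : ℂ) * (2 * Real.pi * I) := by
      push_cast
      ring
    rw [hper, exp_int_mul_two_pi_mul_I]
    simp

noncomputable def xcorr (F G : ℂ → ℂ) (k : ℤ) : ℂ := fc (fun z => starRingEnd ℂ (F z) * G z) k

theorem xcorr_const_one (k : ℤ) :
    xcorr (fun _ => 1) (fun _ => 1) k = if k = 0 then 1 else 0 := by
  simp [xcorr, fc_one]

theorem xcorr_of_eq_add_pow_mul {P Q F G : ℂ → ℂ} (hP : Continuous P) (hQ : Continuous Q)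
    (N : ℕ) (ε δ : ℤ) (hF : ∀ z, F z = P z + ε * (z ^ N * Q z))
    (hG : ∀ z, G z = P z + δ * (z ^ N * Q z)) (k : ℤ) :
    xcorr F G k = xcorr P P k + δ * xcorr P Q (k - N) + ε * xcorr Q P (k + N)
      + ε * δ * xcorr Q Q k := by
  have hpoint : ∀ z : ℂ, ‖z‖ = 1 → starRingEnd ℂ (F z) * G z =
      starRingEnd ℂ (P z) * P z + δ * (z ^ N * (starRingEnd ℂ (P z) * Q z))
      + ε * (starRingEnd ℂ z ^ N * (starRingEnd ℂ (Q z) * P z))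
      + ε * δ * (starRingEnd ℂ (Q z) * Q z) := fun z hz => by
    have hzN : starRingEnd ℂ z ^ N * z ^ N = 1 := by simp [← mul_pow, conj_mul', hz]
    rw [hF, hG]
    simp only [map_add, map_mul, map_pow, map_intCast]
    linear_combination ε * δ * starRingEnd ℂ (Q z) * Q z * hzN
  unfold xcorr
  rw [fc_congr hpoint, fc_add, fc_add, fc_add, fc_const_mul, fc_const_mul, fc_const_mul,
    fc_pow_mul, fc_conj_pow_mul]
  all_goals fun_prop

theorem continuous_Pe (n : ℕ) : Continuous (Pe n) := (RSP n).continuous_aeval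

theorem continuous_Qe (n : ℕ) : Continuous (Qe n) := (RSQ n).continuous_aeval

theorem Pe_zero : Pe 0 = fun _ => 1 := by
  ext
  simp [Pe, RSP, RS]

theorem Qe_zero : Qe 0 = fun _ => 1 := by
  ext
  simp [Qe, RSQ, RS]

theorem Pe_succ (n : ℕ) (z : ℂ) : Pe (n + 1) z = Pe n z + z ^ 2 ^ n * Qe n z := by
  simp [Pe, Qe, RSP, RSQ, RS]

theorem Qe_succ (n : ℕ) (z : ℂ) : Qe (n + 1) z = Pe n z - z ^ 2 ^ n * Qe n z := by
  simp [Pe, Qe, RSP, RSQ, RS]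

section Recurrences

variable (n : ℕ) (k : ℤ)

theorem xcorr_Pe_Pe_succ : xcorr (Pe (n + 1)) (Pe (n + 1)) k = xcorr (Pe n) (Pe n) k
    + xcorr (Pe n) (Qe n) (k - 2 ^ n) + xcorr (Qe n) (Pe n) (k + 2 ^ n)
    + xcorr (Qe n) (Qe n) k := by
  simpa using xcorr_of_eq_add_pow_mul (continuous_Pe n) (continuous_Qe n) (2 ^ n) 1 1
    (by simp [Pe_succ]) (by simp [Pe_succ]) k

theorem xcorr_Pe_Qe_succ : xcorr (Pe (n + 1)) (Qe (n + 1)) k = xcorr (Pe n) (Pe n) k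
    - xcorr (Pe n) (Qe n) (k - 2 ^ n) + xcorr (Qe n) (Pe n) (k + 2 ^ n)
    - xcorr (Qe n) (Qe n) k := by
  simpa [← sub_eq_add_neg] using
    xcorr_of_eq_add_pow_mul (continuous_Pe n) (continuous_Qe n) (2 ^ n) 1 (-1)
      (by simp [Pe_succ]) (by simp [Qe_succ, sub_eq_add_neg]) k

theorem xcorr_Qe_Pe_succ : xcorr (Qe (n + 1)) (Pe (n + 1)) k = xcorr (Pe n) (Pe n) k
    + xcorr (Pe n) (Qe n) (k - 2 ^ n) - xcorr (Qe n) (Pe n) (k + 2 ^ n)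
    - xcorr (Qe n) (Qe n) k := by
  simpa [← sub_eq_add_neg] using
    xcorr_of_eq_add_pow_mul (continuous_Pe n) (continuous_Qe n) (2 ^ n) (-1) 1
      (by simp [Qe_succ, sub_eq_add_neg]) (by simp [Pe_succ]) k

theorem xcorr_Qe_Qe_succ : xcorr (Qe (n + 1)) (Qe (n + 1)) k = xcorr (Pe n) (Pe n) k
    - xcorr (Pe n) (Qe n) (k - 2 ^ n) - xcorr (Qe n) (Pe n) (k + 2 ^ n)
    + xcorr (Qe n) (Qe n) k := by
  simpa [← sub_eq_add_neg] using
    xcorr_of_eq_add_pow_mul (continuous_Pe n) (continuous_Qe n) (2 ^ n) (-1) (-1)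
      (by simp [Qe_succ, sub_eq_add_neg]) (by simp [Qe_succ, sub_eq_add_neg]) k

end Recurrences

theorem xcorr_rs_eq_zero (n : ℕ) {k : ℤ} (hk : 2 ^ n ≤ k ∨ k ≤ -2 ^ n) :
    xcorr (Pe n) (Pe n) k = 0 ∧ xcorr (Pe n) (Qe n) k = 0 ∧ xcorr (Qe n) (Pe n) k = 0 ∧
      xcorr (Qe n) (Qe n) k = 0 := by
  induction n generalizing k with
  | zero =>
    have hk0 : k ≠ 0 := by omega
    simp [Pe_zero, Qe_zero, xcorr_const_one, hk0]
  | succ n ih =>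
    have hN : (0 : ℤ) < 2 ^ n := by positivity
    have h2 : (2 : ℤ) ^ (n + 1) = 2 * 2 ^ n := pow_succ' 2 n
    obtain ⟨a0, -, -, d0⟩ := ih (k := k) (by omega)
    have b1 := (ih (k := k - 2 ^ n) (by omega)).2.1
    have c1 := (ih (k := k + 2 ^ n) (by omega)).2.2.1
    simp [xcorr_Pe_Pe_succ, xcorr_Pe_Qe_succ, xcorr_Qe_Pe_succ, xcorr_Qe_Qe_succ, a0, d0, b1, c1]

theorem xcorr_Pe_Pe_add_xcorr_Qe_Qe (n : ℕ) (k : ℤ) :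
    xcorr (Pe n) (Pe n) k + xcorr (Qe n) (Qe n) k = if k = 0 then 2 ^ (n + 1) else 0 := by
  induction n with
  | zero =>
    simp only [Pe_zero, Qe_zero, xcorr_const_one]
    split_ifs <;> norm_num
  | succ n ih =>
    rw [xcorr_Pe_Pe_succ, xcorr_Qe_Qe_succ]
    split_ifs at ih ⊢ <;> linear_combination 2 * ih

theorem xcorr_Qe_Qe_of_ne_zero (n : ℕ) {k : ℤ} (hk : k ≠ 0) :
    xcorr (Qe n) (Qe n) k = -xcorr (Pe n) (Pe n) k := by
  have h := xcorr_Pe_Pe_add_xcorr_Qe_Qe n k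
  rw [if_neg hk] at h
  linear_combination h

theorem xcorr_Pe_Pe_succ_of_ne_zero (n : ℕ) {k : ℤ} (hk : k ≠ 0) :
    xcorr (Pe (n + 1)) (Pe (n + 1)) k =
      xcorr (Pe n) (Qe n) (k - 2 ^ n) + xcorr (Qe n) (Pe n) (k + 2 ^ n) := by
  rw [xcorr_Pe_Pe_succ, xcorr_Qe_Qe_of_ne_zero n hk]
  ring

theorem xcorr_Pe_Qe_succ_of_ne_zero (n : ℕ) {k : ℤ} (hk : k ≠ 0) :
    xcorr (Pe (n + 1)) (Qe (n + 1)) k = 2 * xcorr (Pe n) (Pe n) k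
      - xcorr (Pe n) (Qe n) (k - 2 ^ n) + xcorr (Qe n) (Pe n) (k + 2 ^ n) := by
  rw [xcorr_Pe_Qe_succ, xcorr_Qe_Qe_of_ne_zero n hk]
  ring

theorem xcorr_Qe_Pe_succ_of_ne_zero (n : ℕ) {k : ℤ} (hk : k ≠ 0) :
    xcorr (Qe (n + 1)) (Pe (n + 1)) k = 2 * xcorr (Pe n) (Pe n) k
      + xcorr (Pe n) (Qe n) (k - 2 ^ n) - xcorr (Qe n) (Pe n) (k + 2 ^ n) := by
  rw [xcorr_Qe_Pe_succ, xcorr_Qe_Qe_of_ne_zero n hk]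
  ring

theorem xcorr_rs_add_two (n : ℕ) {K : ℤ} (hK : 3 * K = 2 * 2 ^ n + 1) :
    xcorr (Pe (n + 2)) (Pe (n + 2)) (4 * K - 1) =
        2 * xcorr (Pe n) (Pe n) K - xcorr (Pe n) (Qe n) (K - 2 ^ n) ∧
      xcorr (Pe (n + 2)) (Qe (n + 2)) (K - 2 ^ (n + 1)) = 2 * xcorr (Pe n) (Pe n) K
        + xcorr (Pe n) (Qe n) (K - 2 ^ n) + 2 * xcorr (Qe n) (Pe n) (K - 2 ^ n) ∧
      xcorr (Qe (n + 2)) (Pe (n + 2)) (K - 2 ^ (n + 1)) = 2 * xcorr (Qe n) (Pe n) (K - 2 ^ n)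
        - 2 * xcorr (Pe n) (Pe n) K - xcorr (Pe n) (Qe n) (K - 2 ^ n) := by
  have hN : (0 : ℤ) < 2 ^ n := by positivity
  have h2 : (2 : ℤ) ^ (n + 1) = 2 * 2 ^ n := pow_succ' 2 n
  have c0 := (xcorr_rs_eq_zero n (k := K + 2 ^ n) (by omega)).2.2.1
  have b0 := (xcorr_rs_eq_zero n (k := K - 2 ^ (n + 1) - 2 ^ n) (by omega)).2.1
  have c1 := (xcorr_rs_eq_zero (n + 1) (k := 4 * K - 1 + 2 ^ (n + 1)) (by omega)).2.2.1
  have b1 := (xcorr_rs_eq_zero (n + 1) (k := K - 2 ^ (n + 1) - 2 ^ (n + 1)) (by omega)).2.1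
  have hb := xcorr_Pe_Qe_succ_of_ne_zero n (k := K) (by omega)
  have hc := xcorr_Qe_Pe_succ_of_ne_zero n (k := K) (by omega)
  have ha := xcorr_Pe_Pe_succ_of_ne_zero n (k := K - 2 ^ (n + 1)) (by omega)
  rw [c0] at hb hc
  rw [b0, show K - 2 ^ (n + 1) + 2 ^ n = K - 2 ^ n by omega] at ha
  have hK' : K - 2 ^ (n + 1) + 2 ^ (n + 1) = K := by ring
  refine ⟨?_, ?_, ?_⟩
  · rw [xcorr_Pe_Pe_succ_of_ne_zero (n + 1) (by omega), c1,
      show 4 * K - 1 - 2 ^ (n + 1) = K by omega, hb]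
    ring
  · rw [xcorr_Pe_Qe_succ_of_ne_zero (n + 1) (by omega), b1, hK', ha, hc]
    ring
  · rw [xcorr_Qe_Pe_succ_of_ne_zero (n + 1) (by omega), b1, hK', ha, hc]
    ring

theorem fc_fP (n : ℕ) : fc (fP n) = xcorr (Pe n) (Pe n) := by
  unfold xcorr fP
  simp only [mul_comm]

theorem fc_fPQ (n : ℕ) : fc (fPQ n) = xcorr (Pe n) (Qe n) := rfl

theorem fc_fQP (n : ℕ) : fc (fQP n) = xcorr (Qe n) (Pe n) := by
  unfold xcorr fQP
  simp only [mul_comm]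

noncomputable def rsOmega (n : ℕ) : Fin 3 → ℂ :=
  ![fc (fP n) ((2 * 2 ^ n + 1) / 3 : ℤ),
    fc (fPQ n) ((2 * 2 ^ n + 1) / 3 - 2 ^ n : ℤ),
    fc (fQP n) ((2 * 2 ^ n + 1) / 3 - 2 ^ n : ℤ)]

theorem rsOmega_zero : rsOmega 0 = ![0, 1, 1] := by
  norm_num [rsOmega, fc_fP, fc_fPQ, fc_fQP, Pe_zero, Qe_zero, xcorr_const_one]

theorem rsOmega_add_two (n : ℕ) (h : (3 : ℤ) ∣ 2 * 2 ^ n + 1) :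
    rsOmega (n + 2) = M2.mulVec (rsOmega n) := by
  obtain ⟨K, hK⟩ := h
  have hk : (2 * 2 ^ n + 1) / 3 = K := by omega
  have hk2 : (2 * 2 ^ (n + 2) + 1) / 3 = 4 * K - 1 := by
    rw [pow_add]
    omega
  have hk2' : 4 * K - 1 - 2 ^ (n + 2) = K - 2 ^ (n + 1) := by
    rw [pow_succ, pow_succ]
    omega
  obtain ⟨ha, hb, hc⟩ := xcorr_rs_add_two n (K := K) (by omega)
  ext i
  fin_cases i <;>
    simp only [rsOmega, hk, hk2, hk2', fc_fP, fc_fPQ, fc_fQP, ha, hb, hc, M2, Matrix.mulVec,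
      dotProduct, Fin.sum_univ_three, Matrix.of_apply, Matrix.cons_val', Matrix.cons_val_fin_one,
      Matrix.cons_val_zero, Matrix.cons_val_one, Matrix.cons_val, Fin.isValue, Fin.zero_eta,
      Fin.mk_one, Fin.reduceFinMk] <;>
    ring

theorem rsOmega_two_mul (m : ℕ) : rsOmega (2 * m) = (M2 ^ m).mulVec ![0, 1, 1] := by
  induction m with
  | zero => simpa using rsOmega_zero
  | succ m ih =>
    have h4 : (4 : ℤ) ^ m % 3 = 1 := by
      simpa [Int.ModEq] using (show (4 : ℤ) ≡ 1 [ZMOD 3] by decide).pow m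
    have h3 : (3 : ℤ) ∣ 2 * 2 ^ (2 * m) + 1 := by
      rw [pow_mul, show (2 : ℤ) ^ 2 = 4 by norm_num]
      omega
    rw [show 2 * (m + 1) = 2 * m + 2 by ring, rsOmega_add_two _ h3, ih, pow_succ',
      Matrix.mulVec_mulVec]

theorem omega_even_formula_general (n : ℕ) (he : Even n) :
    ![fc (fP n) ((2 * 2 ^ n + 1) / 3 : ℤ),
      fc (fPQ n) ((2 * 2 ^ n + 1) / 3 - 2 ^ n : ℤ),
      fc (fQP n) ((2 * 2 ^ n + 1) / 3 - 2 ^ n : ℤ)] =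
    (M2 ^ (n / 2)).mulVec ![0, 1, 1] := by
  obtain ⟨m, rfl⟩ := he
  rw [← two_mul, Nat.mul_div_cancel_left m two_pos]
  exact rsOmega_two_mul m

theorem omega_even_formula (n : ℕ) (hn : 2 ≤ n) (he : Even n) :
    ![fc (fP n) ((2 * 2 ^ n + 1) / 3 : ℤ),
      fc (fPQ n) ((2 * 2 ^ n + 1) / 3 - 2 ^ n : ℤ),
      fc (fQP n) ((2 * 2 ^ n + 1) / 3 - 2 ^ n : ℤ)] =
    (M2 ^ (n / 2)).mulVec ![0, 1, 1] :=
  omega_even_formula_general n he
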